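/- Let $R$ be a commutative ring, $G$, $H$ finite groups, $U$ a finite $(H,G)$-biset, and let $M, M'$ be functors $\mathcal{C}_U \to R\text{-}\mathsf{Mod}$. Then the $R$-module of natural transformations $M \to M'$ is isomorphic to $\prod_{u \in [H\backslash U/G]} \mathrm{Hom}_{RA(u)}(M(u), M'(u))$, where $[H\backslash U/G]$ is a set of orbit representatives and $A(u) = \{(h,g) \mid hu = ug\}$. -/

import Mathlib

open CategoryTheory MulOpposite

/-- An object wrapper: the objects of the category associated to an `(H,G)`-biset `U`
are the elements of `U`. -/
structure BisetCat (H G U : Type*) where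
  x : U

variable {H G U : Type*} [Group H] [Group G]
  [MulAction H U] [MulAction Gᵐᵒᵖ U] [SMulCommClass H Gᵐᵒᵖ U]

/-- The category associated to an `(H,G)`-biset `U`: objects are elements of `U`,
and morphisms `u ⟶ v` are pairs `(h,g)` with `h • u = v • g`; composition of
`(h,g) : u ⟶ v` and `(h',g') : v ⟶ w` is `(h'*h, g'*g)` and the identity is `(1,1)`. -/
instance bisetCategory : Category (BisetCat H G U) where
  Hom u v := {p : H × G // p.1 • u.x = op p.2 • v.x}
  id u := ⟨(1, 1), by simp⟩
  comp {u v w} f g := ⟨(g.1.1 * f.1.1, g.1.2 * f.1.2), by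
    have hf := f.2; have hg := g.2
    calc (g.1.1 * f.1.1) • u.x = g.1.1 • (f.1.1 • u.x) := by rw [mul_smul]
    _ = g.1.1 • (op f.1.2 • v.x) := by rw [hf]
    _ = op f.1.2 • (g.1.1 • v.x) := by rw [smul_comm]
    _ = op f.1.2 • (op g.1.2 • w.x) := by rw [hg]
    _ = op (g.1.2 * f.1.2) • w.x := by rw [← mul_smul, ← op_mul]⟩
  id_comp f := Subtype.ext (by simp [Prod.ext_iff])
  comp_id f := Subtype.ext (by simp [Prod.ext_iff])
  assoc f g h := Subtype.ext (by simp [Prod.ext_iff, mul_assoc])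


/-- The stabilizer subgroup `A(u) = {(h,g) | h • u = u • g}` of `H × G`. -/
def Apt (H G : Type*) {U : Type*} [Group H] [Group G]
    [MulAction H U] [MulAction Gᵐᵒᵖ U] [SMulCommClass H Gᵐᵒᵖ U] (u : U) :
    Subgroup (H × G) where
  carrier := {p : H × G | p.1 • u = op p.2 • u}
  one_mem' := by simp
  mul_mem' := by
    intro a b ha hb
    show (a.1 * b.1) • u = op (a.2 * b.2) • u
    calc (a.1 * b.1) • u = a.1 • (b.1 • u) := mul_smul _ _ _
    _ = a.1 • (op b.2 • u) := by rw [hb]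
    _ = op b.2 • (a.1 • u) := smul_comm _ _ _
    _ = op b.2 • (op a.2 • u) := by rw [ha]
    _ = op (a.2 * b.2) • u := by rw [← mul_smul, ← op_mul]
  inv_mem' := by
    intro a ha
    show a.1⁻¹ • u = op (a.2⁻¹) • u
    have h1 : u = a.1⁻¹ • op a.2 • u := by
      rw [← ha, inv_smul_smul]
    calc a.1⁻¹ • u = a.1⁻¹ • (op a.2⁻¹ • op a.2 • u) := by
          rw [MulOpposite.op_inv, inv_smul_smul]
    _ = op a.2⁻¹ • (a.1⁻¹ • (op a.2 • u)) := by
          rw [smul_comm]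
    _ = op a.2⁻¹ • u := by rw [← h1]

universe u

variable {R : Type u} [CommRing R]

/-- The `R`-submodule of `RA(u)`-linear maps `M(u) → M'(u)`, i.e. `R`-linear maps
commuting with the action of `A(u) = {(h,g) | h • u = u • g}`. -/
def equivariantHom {H G U : Type u} [Group H] [Group G]
    [MulAction H U] [MulAction Gᵐᵒᵖ U] [SMulCommClass H Gᵐᵒᵖ U]
    (M M' : BisetCat H G U ⥤ ModuleCat.{u} R) (u : U) :
    Submodule R (M.obj ⟨u⟩ →ₗ[R] M'.obj ⟨u⟩) where
  carrier := {f | ∀ p : Apt H G u, ∀ m,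
    f (M.map (⟨(p : H × G), p.2⟩ : (⟨u⟩ : BisetCat H G U) ⟶ ⟨u⟩) m) =
      M'.map (⟨(p : H × G), p.2⟩ : (⟨u⟩ : BisetCat H G U) ⟶ ⟨u⟩) (f m)}
  add_mem' := by
    intro f g hf hg p m
    simp only [LinearMap.add_apply, map_add]
    rw [hf p, hg p]
  zero_mem' := by
    intro p m
    simp
  smul_mem' := by
    intro c f hf p m
    simp only [LinearMap.smul_apply, map_smul]
    rw [hf p]


/-!
Every morphism `(h, g) : u ⟶ v` of the biset category is invertible, with inverse
`(h⁻¹, g⁻¹)`, so the category is a groupoid whose connected components are the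
`(H, G)`-orbits of `U`. In a groupoid a natural transformation `η` is determined by its
components at one representative `r` of each component: if `θ : X ⟶ r`, naturality forces
`η_X = M'(θ)⁻¹ ∘ η_r ∘ M(θ)`. Conversely this formula defines a natural transformation
exactly when each `η_r` commutes with the automorphisms of `r`, which are the elements of `A(r)`.
-/

namespace CategoryTheory

variable {C : Type*} [Category C] (M M' : C ⥤ ModuleCat R)

def endEquivariantHom (X : C) : Submodule R (M.obj X →ₗ[R] M'.obj X) where
  carrier := {f | ∀ (e : X ⟶ X) m, f (M.map e m) = M'.map e (f m)}
  add_mem' hf hg e m := by simp only [LinearMap.add_apply, map_add, hf e, hg e]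
  zero_mem' e m := by simp
  smul_mem' c f hf e m := by simp only [LinearMap.smul_apply, map_smul, hf e]

variable {M M'}

lemma app_mem_endEquivariantHom (η : M ⟶ M') (X : C) :
    (η.app X).hom ∈ endEquivariantHom M M' X := fun e m =>
  NatTrans.naturality_apply η e m

variable (M M')

noncomputable def transportHom {X Z : C} (α : X ⟶ Z) [IsIso α]
    (f : M.obj Z →ₗ[R] M'.obj Z) : M.obj X →ₗ[R] M'.obj X :=
  (M'.map (inv α)).hom ∘ₗ f ∘ₗ (M.map α).hom

variable {M M'}

lemma transportHom_app {X Z : C} (α : X ⟶ Z) [IsIso α] (η : M ⟶ M') :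
    transportHom M M' α (η.app Z).hom = (η.app X).hom := by
  ext m
  simp [transportHom]

lemma transportHom_naturality {X Y Z : C} {f : M.obj Z →ₗ[R] M'.obj Z}
    (hf : f ∈ endEquivariantHom M M' Z) (α : X ⟶ Z) [IsIso α] (β : Y ⟶ Z) [IsIso β]
    (φ : X ⟶ Y) :
    transportHom M M' β f ∘ₗ (M.map φ).hom = (M'.map φ).hom ∘ₗ transportHom M M' α f := by
  ext m
  have hβφ : M.map β (M.map φ m) = M.map (inv α ≫ φ ≫ β) (M.map α m) := by
    rw [← Functor.map_comp_apply, ← Functor.map_comp_apply, IsIso.hom_inv_id_assoc]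
  simp only [transportHom, LinearMap.comp_apply]
  rw [hβφ, hf, ← Functor.map_comp_apply, ← Functor.map_comp_apply]
  simp

lemma transportHom_self {Z : C} {f : M.obj Z →ₗ[R] M'.obj Z}
    (hf : f ∈ endEquivariantHom M M' Z) (β : Z ⟶ Z) [IsIso β] : transportHom M M' β f = f := by
  ext m
  simp [transportHom, hf β m]

variable (M M') [IsGroupoid C] {ι : Type*} (r : ι → C) (ρ : C → ι) (θ : ∀ X, X ⟶ r (ρ X))

noncomputable def natTransEquivPi (hρ : ∀ {X Y : C}, (X ⟶ Y) → ρ X = ρ Y)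
    (hρr : ∀ i, ρ (r i) = i) : (M ⟶ M') ≃ₗ[R] ∀ i, endEquivariantHom M M' (r i) where
  toFun η i := ⟨(η.app (r i)).hom, app_mem_endEquivariantHom η _⟩
  map_add' η η' := by ext; simp
  map_smul' c η := by ext; simp
  invFun f :=
    { app X := ModuleCat.ofHom (transportHom M M' (θ X) (f (ρ X)))
      naturality X Y φ := by
        -- `ρ X = ρ Y` holds only propositionally, so the indices are generalised before `subst`.
        have key : ∀ i j, i = j → ∀ (α : X ⟶ r i) (β : Y ⟶ r j),
            transportHom M M' β (f j) ∘ₗ (M.map φ).hom =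
              (M'.map φ).hom ∘ₗ transportHom M M' α (f i) := by
          rintro i _ rfl α β
          exact transportHom_naturality (f i).2 α β φ
        ext1
        exact key _ _ (hρ φ) (θ X) (θ Y) }
  left_inv η := by
    ext X : 2
    exact ModuleCat.hom_ext (transportHom_app (θ X) η)
  right_inv f := by
    have key : ∀ i j, i = j → ∀ β : r j ⟶ r i, transportHom M M' β (f i) = f j := by
      rintro i _ rfl β
      exact transportHom_self (f i).2 β
    funext i
    exact Subtype.ext (key _ _ (hρr i) (θ (r i)))

end CategoryTheory

namespace BisetCat

def invHom {a b : BisetCat H G U} (φ : a ⟶ b) : b ⟶ a :=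
  ⟨(φ.1.1⁻¹, φ.1.2⁻¹), by
    show φ.1.1⁻¹ • b.x = op φ.1.2⁻¹ • a.x
    rw [inv_smul_eq_iff, smul_comm, φ.2, MulOpposite.op_inv, inv_smul_smul]⟩

instance : IsGroupoid (BisetCat H G U) where
  all_isIso φ := ⟨invHom φ, Subtype.ext (Prod.ext (inv_mul_cancel _) (inv_mul_cancel _)),
    Subtype.ext (Prod.ext (mul_inv_cancel _) (mul_inv_cancel _))⟩

lemma nonempty_hom_iff {a b : U} :
    Nonempty ((⟨a⟩ : BisetCat H G U) ⟶ ⟨b⟩) ↔ ∃ (h : H) (g : G), h • op g • a = b := by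
  constructor
  · rintro ⟨φ⟩
    exact ⟨φ.1.1, φ.1.2⁻¹, by rw [smul_comm, φ.2, MulOpposite.op_inv, inv_smul_smul]⟩
  · rintro ⟨h, g, rfl⟩
    exact ⟨⟨(h, g⁻¹), by rw [smul_comm h, MulOpposite.op_inv, inv_smul_smul]⟩⟩

end BisetCat

lemma equivariantHom_eq_endEquivariantHom {H G U : Type u} [Group H] [Group G] [MulAction H U]
    [MulAction Gᵐᵒᵖ U] [SMulCommClass H Gᵐᵒᵖ U]
    (M M' : BisetCat H G U ⥤ ModuleCat.{u} R) (u : U) :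
    equivariantHom M M' u = endEquivariantHom M M' ⟨u⟩ := by
  ext f
  exact ⟨fun hf e => hf ⟨e.1, e.2⟩, fun hf p => hf _⟩

theorem natTrans_iso_prod_equivariantHom_general {H G U : Type u} [Group H] [Group G]
    [MulAction H U] [MulAction Gᵐᵒᵖ U] [SMulCommClass H Gᵐᵒᵖ U]
    (M M' : BisetCat H G U ⥤ ModuleCat.{u} R)
    (reps : Set U) (hreps : ∀ u : U, ∃! r : U, r ∈ reps ∧ ∃ (h : H) (g : G), h • (op g • u) = r) :
    ∃ e : (M ⟶ M') ≃ₗ[R] (∀ r : reps, equivariantHom M M' (r : U)),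
      ∀ (η : M ⟶ M') (r : reps), ((e η r : M.obj ⟨r⟩ →ₗ[R] M'.obj ⟨r⟩)) = (η.app ⟨(r : U)⟩).hom := by
  choose ρ hρ_mem hρ_orbit using fun v => (hreps v).exists
  have hρ_eq : ∀ v r, r ∈ reps → (∃ (h : H) (g : G), h • op g • v = r) → ρ v = r :=
    fun v r hr hvr => (hreps v).unique ⟨hρ_mem v, hρ_orbit v⟩ ⟨hr, hvr⟩
  let rep : BisetCat H G U → reps := fun X => ⟨ρ X.x, hρ_mem X.x⟩
  let θ : ∀ X : BisetCat H G U, X ⟶ ⟨(rep X : U)⟩ := fun X =>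
    (BisetCat.nonempty_hom_iff.2 (hρ_orbit X.x)).some
  have hrep : ∀ {X Y : BisetCat H G U}, (X ⟶ Y) → rep X = rep Y := fun φ =>
    Subtype.ext (hρ_eq _ _ (hρ_mem _) (BisetCat.nonempty_hom_iff.1 ⟨φ ≫ θ _⟩))
  have hrep_self : ∀ r : reps, rep ⟨r⟩ = r := fun r =>
    Subtype.ext (hρ_eq _ _ r.2 ⟨1, 1, by simp⟩)
  exact ⟨(natTransEquivPi M M' (fun r : reps => ⟨r⟩) rep θ hrep hrep_self).trans
    (LinearEquiv.piCongrRight fun r => LinearEquiv.ofEq _ _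
      (equivariantHom_eq_endEquivariantHom M M' r).symm), fun η r => rfl⟩

/-- The `R`-module of natural transformations `M ⟶ M'` is isomorphic to the product,
over orbit representatives `r`, of the modules of `RA(r)`-linear maps `M(r) → M'(r)`. -/
theorem natTrans_iso_prod_equivariantHom {H G U : Type u} [Group H] [Group G]
    [Finite H] [Finite G] [Finite U]
    [MulAction H U] [MulAction Gᵐᵒᵖ U] [SMulCommClass H Gᵐᵒᵖ U]
    (M M' : BisetCat H G U ⥤ ModuleCat.{u} R)
    (reps : Set U) (hreps : ∀ u : U, ∃! r : U, r ∈ reps ∧ ∃ (h : H) (g : G), h • (op g • u) = r) :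
    ∃ e : (M ⟶ M') ≃ₗ[R] (∀ r : reps, equivariantHom M M' (r : U)),
      ∀ (η : M ⟶ M') (r : reps), ((e η r : M.obj ⟨r⟩ →ₗ[R] M'.obj ⟨r⟩)) = (η.app ⟨(r : U)⟩).hom :=
  natTrans_iso_prod_equivariantHom_general M M' reps hreps
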